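/- arXiv:1905.04103 — 4 statements merged into one kernel-verified Lean document; each statement's English description precedes it below -/
import Mathlib

section
/- Assume α_0 > 0 and α_1 > 0. Then Z := ∫_H ‖u‖^{−1} γ(du) is finite and strictly positive. Consequently Z^{−1}‖u‖^{−1}γ(du) is a Borel probability measure on H, and its image under the radial projection u ↦ u/‖u‖ is a Borel probability measure μ on the unit sphere S of H. -/
/-!
Only two coordinates matter: with `X = ⟪u, e₀⟫` and `Y = ⟪u, e₁⟫`, Bessel's inequality gives
`|X| |Y| ≤ X² + Y² ≤ ‖u‖²`, so `‖u‖⁻¹ ≤ |X|^(-1/2) |Y|^(-1/2)`. Under `γ` the pair `(X, Y)` is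
jointly Gaussian and uncorrelated, hence independent, so the expectation of the right-hand side
factors into two integrals of `|x|^(-1/2)` against nondegenerate one-dimensional Gaussians; these
are finite because Gaussian densities are bounded. Since `X ≠ 0` almost surely, `γ {0} = 0`, which
gives `Z > 0` and shows that the normalized measure is carried by `{u ≠ 0}`, whose radial
projection lies in the unit sphere.
-/

open MeasureTheory ProbabilityTheory
open scoped RealInnerProductSpace ENNReal NNReal

namespace ProbabilityTheory

lemma gaussianReal_le_smul_volume (m : ℝ) {v : ℝ≥0} (hv : v ≠ 0) :
    gaussianReal m v ≤ ENNReal.ofReal (√(2 * Real.pi * v))⁻¹ • volume := by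
  rw [gaussianReal_of_var_ne_zero m hv, ← withDensity_const]
  refine withDensity_mono (Filter.Eventually.of_forall fun x => ?_)
  rw [gaussianPDF_def]
  refine ENNReal.ofReal_le_ofReal ?_
  rw [gaussianPDFReal_def]
  refine mul_le_of_le_one_right (by positivity) (Real.exp_le_one_iff.mpr ?_)
  exact div_nonpos_of_nonpos_of_nonneg (neg_nonpos.mpr (sq_nonneg _)) (by positivity)

lemma integrable_abs_rpow_neg_gaussianReal (m : ℝ) {v : ℝ≥0} (hv : v ≠ 0) {s : ℝ}
    (hs₀ : 0 ≤ s) (hs₁ : s < 1) :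
    Integrable (fun x : ℝ => |x| ^ (-s)) (gaussianReal m v) := by
  have hmeas : Measurable fun x : ℝ => |x| ^ (-s) := continuous_abs.measurable.pow_const _
  rw [← integrableOn_univ, ← Set.union_compl_self (Metric.closedBall (0 : ℝ) 1)]
  refine IntegrableOn.union ?_ ?_
  · have hloc : LocallyIntegrable (fun x : ℝ => |x| ^ (-s)) volume :=
      locallyIntegrable_of_norm_le_rpow (C := 1) (α := s) (by simp) (by simpa using hs₁)
        (Filter.Eventually.of_forall fun x => by
          simp [Real.norm_eq_abs, abs_of_nonneg (Real.rpow_nonneg (abs_nonneg x) _)])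
        hmeas.aestronglyMeasurable
    exact ((hloc.integrableOn_isCompact (isCompact_closedBall 0 1)).smul_measure
      ENNReal.ofReal_ne_top).mono_measure
      ((Measure.restrict_mono le_rfl (gaussianReal_le_smul_volume m hv)).trans_eq
        (Measure.restrict_smul _ _ _))
  · refine Integrable.mono' (integrable_const (1 : ℝ)) hmeas.aestronglyMeasurable ?_
    refine (ae_restrict_iff' measurableSet_closedBall.compl).mpr
      (Filter.Eventually.of_forall fun x hx => ?_)
    have hx1 : 1 ≤ |x| := by
      simp only [Set.mem_compl_iff, Metric.mem_closedBall, dist_zero_right, not_le] at hx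
      exact hx.le
    rw [Real.norm_eq_abs, abs_of_nonneg (Real.rpow_nonneg (abs_nonneg x) _)]
    exact Real.rpow_le_one_of_one_le_of_nonpos hx1 (neg_nonpos.mpr hs₀)

variable {Ω : Type*} {mΩ : MeasurableSpace Ω} {P : Measure Ω} {X : Ω → ℝ} {m : ℝ} {v : ℝ≥0}

lemma variance_eq_of_map_eq_gaussianReal (hX : AEMeasurable X P)
    (h : P.map X = gaussianReal m v) :
    Var[X; P] = v := by
  rw [← variance_id_map hX, h, variance_id_gaussianReal]

lemma ae_ne_of_map_eq_gaussianReal (hX : AEMeasurable X P) (hv : v ≠ 0)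
    (h : P.map X = gaussianReal m v) (c : ℝ) :
    ∀ᵐ ω ∂P, X ω ≠ c := by
  have : NullSingletonClass (gaussianReal m v) := nullSingletonClass_gaussianReal hv
  refine ae_of_ae_map (p := fun x => x ≠ c) hX ?_
  rw [h]
  simp [ae_iff]

end ProbabilityTheory

section InnerProductSpace

variable {H : Type*} [NormedAddCommGroup H] [InnerProductSpace ℝ H]

lemma Orthonormal.inv_norm_le_abs_inner_rpow_mul {ι : Type*} {e : ι → H} (he : Orthonormal ℝ e)
    {i j : ι} (hij : i ≠ j) {u : H} (hi : ⟪u, e i⟫ ≠ 0) (hj : ⟪u, e j⟫ ≠ 0) :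
    ‖u‖⁻¹ ≤ |⟪u, e i⟫| ^ (-(1 / 2 : ℝ)) * |⟪u, e j⟫| ^ (-(1 / 2 : ℝ)) := by
  classical
  have hbessel : ⟪u, e i⟫ ^ 2 + ⟪u, e j⟫ ^ 2 ≤ ‖u‖ ^ 2 := by
    have h := he.sum_inner_products_le (s := {i, j}) u
    rw [Finset.sum_pair hij] at h
    simpa [Real.norm_eq_abs, sq_abs, real_inner_comm] using h
  have hprod : |⟪u, e i⟫| * |⟪u, e j⟫| ≤ ‖u‖ ^ 2 := by
    nlinarith [sq_nonneg (|⟪u, e i⟫| - |⟪u, e j⟫|), sq_abs ⟪u, e i⟫, sq_abs ⟪u, e j⟫]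
  rw [← Real.mul_rpow (abs_nonneg _) (abs_nonneg _),
    show ‖u‖⁻¹ = (‖u‖ ^ 2) ^ (-(1 / 2 : ℝ)) by
      rw [← Real.rpow_natCast, ← Real.rpow_mul (norm_nonneg u)]
      norm_num [Real.rpow_neg_one]]
  exact Real.rpow_le_rpow_of_nonpos (by positivity) hprod (by norm_num)

lemma Orthonormal.tsum_mul_inner_sum_sq {ι : Type*} {e : ι → H} (he : Orthonormal ℝ e)
    (c : ι → ℝ) (s : Finset ι) :
    ∑' n, c n * ⟪∑ i ∈ s, e i, e n⟫ ^ 2 = ∑ i ∈ s, c i := by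
  classical
  have hinner : ∀ n, ⟪∑ i ∈ s, e i, e n⟫ = if n ∈ s then 1 else 0 := by
    intro n
    simp only [sum_inner, orthonormal_iff_ite.mp he, Finset.sum_ite_eq']
  rw [tsum_eq_sum (s := s) fun n hn => by simp [hinner, hn]]
  exact Finset.sum_congr rfl fun n hn => by simp [hinner, hn]

variable [MeasurableSpace H] [BorelSpace H]

namespace ProbabilityTheory

lemma isGaussian_of_map_inner_eq_gaussianReal [CompleteSpace H] {γ : Measure H}
    {m : H → ℝ} {v : H → ℝ≥0}
    (hγ : ∀ x : H, γ.map (fun u => ⟪u, x⟫) = gaussianReal (m x) (v x)) : IsGaussian γ := by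
  refine isGaussian_of_map_eq_gaussianReal fun L => ?_
  set x := (InnerProductSpace.toDual ℝ H).symm L
  refine ⟨m x, v x, ?_⟩
  convert hγ x using 2
  ext u
  rw [real_inner_comm, InnerProductSpace.toDual_symm_apply]

/-- `(⟪u, x⟫, ⟪u, y⟫)` is jointly Gaussian, and additivity of the variance forces its
covariance to vanish. -/
lemma indepFun_inner_of_map_eq_gaussianReal [CompleteSpace H] [SecondCountableTopology H]
    {γ : Measure H} {m : H → ℝ} {v : H → ℝ≥0}
    (hγ : ∀ x : H, γ.map (fun u => ⟪u, x⟫) = gaussianReal (m x) (v x))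
    {x y : H} (hxy : v (x + y) = v x + v y) :
    IndepFun (fun u => ⟪u, x⟫) (fun u => ⟪u, y⟫) γ := by
  have : IsGaussian γ := isGaussian_of_map_inner_eq_gaussianReal hγ
  have hlaw : HasGaussianLaw (fun u => (⟪u, x⟫, ⟪u, y⟫)) γ := by
    have hfun : (fun u => (⟪u, x⟫, ⟪u, y⟫)) = (innerSL ℝ x).prod (innerSL ℝ y) := by
      ext u <;> simp [real_inner_comm]
    rw [hfun]
    exact IsGaussian.hasGaussianLaw_id.map_fun _
  refine hlaw.indepFun_of_covariance_eq_zero ?_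
  have hvar : ∀ z : H, Var[fun u => ⟪u, z⟫; γ] = v z := fun z =>
    variance_eq_of_map_eq_gaussianReal (by fun_prop) (hγ z)
  have hsum := variance_fun_add hlaw.fst.memLp_two hlaw.snd.memLp_two
  simp only [← inner_add_right, hvar, hxy, NNReal.coe_add] at hsum
  linarith

lemma integrable_inv_norm_of_indepFun {γ : Measure H} [IsProbabilityMeasure γ]
    {ι : Type*} {e : ι → H} (he : Orthonormal ℝ e) {i j : ι} (hij : i ≠ j)
    (hind : IndepFun (fun u => ⟪u, e i⟫) (fun u => ⟪u, e j⟫) γ)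
    {mi mj : ℝ} {vi vj : ℝ≥0} (hvi : vi ≠ 0) (hvj : vj ≠ 0)
    (hi : γ.map (fun u => ⟪u, e i⟫) = gaussianReal mi vi)
    (hj : γ.map (fun u => ⟪u, e j⟫) = gaussianReal mj vj) :
    Integrable (fun u : H => ‖u‖⁻¹) γ := by
  set f : ℝ → ℝ := fun x => |x| ^ (-(1 / 2 : ℝ))
  have hf : Measurable f := continuous_abs.measurable.pow_const _
  have hcoord : ∀ {k : ι} {m : ℝ} {v : ℝ≥0}, v ≠ 0 →
      γ.map (fun u => ⟪u, e k⟫) = gaussianReal m v → Integrable (fun u => f ⟪u, e k⟫) γ := by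
    intro k m v hv hk
    have := integrable_abs_rpow_neg_gaussianReal m hv (s := 1 / 2) (by norm_num) (by norm_num)
    rw [← hk] at this
    exact this.comp_measurable (by fun_prop)
  refine ((hind.comp hf hf).integrable_mul (hcoord hvi hi) (hcoord hvj hj)).mono'
    (by fun_prop) ?_
  filter_upwards [ae_ne_of_map_eq_gaussianReal (by fun_prop) hvi hi 0,
    ae_ne_of_map_eq_gaussianReal (by fun_prop) hvj hj 0] with u hui huj
  rw [Real.norm_eq_abs, abs_of_nonneg (inv_nonneg.2 (norm_nonneg u))]
  exact he.inv_norm_le_abs_inner_rpow_mul hij hui huj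

end ProbabilityTheory

end InnerProductSpace

lemma integral_inv_norm_pos {E : Type*} [NormedAddCommGroup E] [MeasurableSpace E]
    [BorelSpace E] {γ : Measure E} [IsProbabilityMeasure γ] (hγ : ∀ᵐ u ∂γ, u ≠ 0)
    (hint : Integrable (fun u : E => ‖u‖⁻¹) γ) :
    0 < ∫ u, ‖u‖⁻¹ ∂γ := by
  have hsupp : Function.support (fun u : E => ‖u‖⁻¹) = {0}ᶜ := by
    ext u
    simp
  rw [integral_pos_iff_support_of_nonneg (fun u => inv_nonneg.2 (norm_nonneg u)) hint, hsupp,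
    prob_compl_eq_one_iff (measurableSet_singleton 0) |>.mpr (by simpa [ae_iff] using hγ)]
  exact one_pos

lemma map_inv_norm_smul_sphere {E : Type*} [NormedAddCommGroup E] [NormedSpace ℝ E]
    [MeasurableSpace E] [BorelSpace E] {ν : Measure E} [IsProbabilityMeasure ν] (h₀ : ν {0} = 0) :
    ν.map (fun u : E => ‖u‖⁻¹ • u) (Metric.sphere 0 1) = 1 := by
  have hpre : (fun u : E => ‖u‖⁻¹ • u) ⁻¹' Metric.sphere 0 1 = {0}ᶜ := by
    ext u
    by_cases hu : u = 0
    · simp [hu]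
    · simp [hu, norm_smul]
  rw [Measure.map_apply (by fun_prop) Metric.isClosed_sphere.measurableSet, hpre,
    prob_compl_eq_one_iff (measurableSet_singleton 0)]
  exact h₀

lemma isProbabilityMeasure_withDensity_inv_integral_mul {α : Type*} [MeasurableSpace α]
    {μ : Measure α} {f : α → ℝ} (hf₀ : ∀ x, 0 ≤ f x) (hf : Integrable f μ)
    (hpos : 0 < ∫ x, f x ∂μ) :
    IsProbabilityMeasure (μ.withDensity fun x => ENNReal.ofReal ((∫ y, f y ∂μ)⁻¹ * f x)) := by
  constructor
  simp_rw [withDensity_apply _ MeasurableSet.univ, Measure.restrict_univ,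
    ENNReal.ofReal_mul (inv_nonneg.2 hpos.le)]
  rw [lintegral_const_mul' _ _ ENNReal.ofReal_ne_top,
    ← ofReal_integral_eq_lintegral_ofReal hf (Filter.Eventually.of_forall hf₀),
    ← ENNReal.ofReal_mul (inv_nonneg.2 hpos.le), inv_mul_cancel₀ hpos.ne', ENNReal.ofReal_one]

theorem stmt7_general
    {H : Type*} [NormedAddCommGroup H] [InnerProductSpace ℝ H] [CompleteSpace H]
    [SecondCountableTopology H] [MeasurableSpace H] [BorelSpace H]
    (b : HilbertBasis ℕ ℝ H) (α : ℕ → ℝ)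
    (γ : Measure H) [IsProbabilityMeasure γ]
    (hγ : ∀ x : H, Measure.map (fun u => ⟪u, x⟫) γ
      = ProbabilityTheory.gaussianReal 0
          (Real.toNNReal (∑' n, (α n) ^ 2 * ⟪x, b n⟫ ^ 2)))
    (hα0 : 0 < α 0) (hα1 : 0 < α 1) :
    Integrable (fun u : H => ‖u‖⁻¹) γ ∧
    0 < ∫ u : H, ‖u‖⁻¹ ∂γ ∧
    IsProbabilityMeasure
      (γ.withDensity fun u => ENNReal.ofReal ((∫ w : H, ‖w‖⁻¹ ∂γ)⁻¹ * ‖u‖⁻¹)) ∧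
    IsProbabilityMeasure
      (Measure.map (fun u : H => ‖u‖⁻¹ • u)
        (γ.withDensity fun u => ENNReal.ofReal ((∫ w : H, ‖w‖⁻¹ ∂γ)⁻¹ * ‖u‖⁻¹))) ∧
    Measure.map (fun u : H => ‖u‖⁻¹ • u)
        (γ.withDensity fun u => ENNReal.ofReal ((∫ w : H, ‖w‖⁻¹ ∂γ)⁻¹ * ‖u‖⁻¹))
        (Metric.sphere (0 : H) 1) = 1 := by
  have hvar (s : Finset ℕ) : ∑' n, α n ^ 2 * ⟪∑ i ∈ s, b i, b n⟫ ^ 2 = ∑ i ∈ s, α i ^ 2 :=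
    b.orthonormal.tsum_mul_inner_sum_sq _ s
  have hvar_single (i : ℕ) : ∑' n, α n ^ 2 * ⟪b i, b n⟫ ^ 2 = α i ^ 2 := by
    simpa using hvar {i}
  have hvar_ne (i : ℕ) (hi : 0 < α i) : Real.toNNReal (∑' n, α n ^ 2 * ⟪b i, b n⟫ ^ 2) ≠ 0 := by
    simpa [hvar_single] using hi.ne'
  have hind : IndepFun (fun u => ⟪u, b 0⟫) (fun u => ⟪u, b 1⟫) γ := by
    refine indepFun_inner_of_map_eq_gaussianReal hγ ?_
    rw [show b 0 + b 1 = ∑ i ∈ {0, 1}, b i by simp, hvar, hvar_single, hvar_single,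
      Finset.sum_pair zero_ne_one, Real.toNNReal_add (sq_nonneg _) (sq_nonneg _)]
  have hint := integrable_inv_norm_of_indepFun b.orthonormal zero_ne_one hind
    (hvar_ne 0 hα0) (hvar_ne 1 hα1) (hγ _) (hγ _)
  have hne : ∀ᵐ u ∂γ, u ≠ 0 :=
    (ae_ne_of_map_eq_gaussianReal (by fun_prop) (hvar_ne 0 hα0) (hγ (b 0)) 0).mono
      fun u hu h => hu (by simp [h])
  have hpos := integral_inv_norm_pos hne hint
  have hprob := isProbabilityMeasure_withDensity_inv_integral_mul
    (fun u => inv_nonneg.2 (norm_nonneg u)) hint hpos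
  exact ⟨hint, hpos, hprob, Measure.isProbabilityMeasure_map (by fun_prop),
    map_inv_norm_smul_sphere (withDensity_absolutelyContinuous γ _ (by simpa [ae_iff] using hne))⟩

/-- **Finiteness and positivity of the normalizing constant of the invariant
measure (Theorem 2.1).** Let `γ` be the centered Gaussian measure on a real
separable Hilbert space `H` with covariance eigenvalues `α n ^ 2` in a Hilbert
basis `(e n)`, `∑ α n ^ 2 < ∞`, and assume `α 0 > 0` and `α 1 > 0`. Then
`Z := ∫ ‖u‖⁻¹ γ(du)` is finite and strictly positive; consequently
`Z⁻¹ ‖u‖⁻¹ γ(du)` is a Borel probability measure on `H`, and its image under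
the radial projection `u ↦ u/‖u‖` is a Borel probability measure carried by the
unit sphere `S` of `H`. -/
theorem stmt7
    {H : Type*} [NormedAddCommGroup H] [InnerProductSpace ℝ H] [CompleteSpace H]
    [SecondCountableTopology H] [MeasurableSpace H] [BorelSpace H]
    (b : HilbertBasis ℕ ℝ H) (α : ℕ → ℝ) (hα : ∀ n, 0 ≤ α n)
    (hsum : Summable fun n => (α n) ^ 2)
    (γ : Measure H) [IsProbabilityMeasure γ]
    (hγ : ∀ x : H, Measure.map (fun u => ⟪u, x⟫) γ
      = ProbabilityTheory.gaussianReal 0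
          (Real.toNNReal (∑' n, (α n) ^ 2 * ⟪x, b n⟫ ^ 2)))
    (hα0 : 0 < α 0) (hα1 : 0 < α 1) :
    Integrable (fun u : H => ‖u‖⁻¹) γ ∧
    0 < ∫ u : H, ‖u‖⁻¹ ∂γ ∧
    IsProbabilityMeasure
      (γ.withDensity fun u => ENNReal.ofReal ((∫ w : H, ‖w‖⁻¹ ∂γ)⁻¹ * ‖u‖⁻¹)) ∧
    IsProbabilityMeasure
      (Measure.map (fun u : H => ‖u‖⁻¹ • u)
        (γ.withDensity fun u => ENNReal.ofReal ((∫ w : H, ‖w‖⁻¹ ∂γ)⁻¹ * ‖u‖⁻¹))) ∧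
    Measure.map (fun u : H => ‖u‖⁻¹ • u)
        (γ.withDensity fun u => ENNReal.ofReal ((∫ w : H, ‖w‖⁻¹ ∂γ)⁻¹ * ‖u‖⁻¹))
        (Metric.sphere (0 : H) 1) = 1 :=
  stmt7_general b α γ hγ hα0 hα1
end

section
/- Under hypotheses (i)–(iv) on the process v, the function r ↦ E[⟨v_0, v_r⟩] is absolutely integrable on [0, ∞), and lim_{T→∞} (1/T) · E[ ‖ ∫_0^T v_s ds ‖² ] = 2 ∫_0^∞ E[⟨v_0, v_r⟩] dr, the limit being finite. -/
open MeasureTheory Filter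
open scoped RealInnerProductSpace Topology

section Aux

theorem aux_inner_simplefunc {α : Type*} {m m0 : MeasurableSpace α} {μ : Measure α}
    [IsFiniteMeasure μ] (hm : m ≤ m0)
    {H : Type*} [NormedAddCommGroup H] [InnerProductSpace ℝ H] [CompleteSpace H]
    {f : α → H} (hf : Integrable f μ) [SigmaFinite (μ.trim hm)]
    (ψ : @SimpleFunc α m H) :
    ∫ x, ⟪ψ x, (μ[f|m]) x⟫ ∂μ = ∫ x, ⟪ψ x, f x⟫ ∂μ := by
  have hint : ∀ (ψ : @SimpleFunc α m H) (u : α → H), Integrable u μ →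
      Integrable (fun x => ⟪ψ x, u x⟫) μ := by
    intro ψ u hu
    obtain ⟨B, hB⟩ := @SimpleFunc.exists_forall_norm_le α H m _ ψ
    have hsm : StronglyMeasurable[m] ψ := @SimpleFunc.stronglyMeasurable α H m _ ψ
    refine (hu.norm.const_mul B).mono' ((hsm.mono hm).aestronglyMeasurable.inner hu.1) ?_
    filter_upwards with x
    calc ‖⟪ψ x, u x⟫‖ ≤ ‖ψ x‖ * ‖u x‖ := norm_inner_le_norm _ _
    _ ≤ B * ‖u x‖ := mul_le_mul_of_nonneg_right (hB x) (norm_nonneg _)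
  refine @SimpleFunc.induction α H m _
    (fun ψ => ∫ x, ⟪ψ x, (μ[f|m]) x⟫ ∂μ = ∫ x, ⟪ψ x, f x⟫ ∂μ) ?_ ?_ ψ
  · intro c0 s hs
    have hind : ∀ (u : α → H),
        (fun x => ⟪(@SimpleFunc.piecewise α H m s hs (@SimpleFunc.const α H m c0)
          (@SimpleFunc.const α H m (0:H))) x, u x⟫)
        = fun x => s.indicator (fun y => ⟪c0, u y⟫) x := by
      intro u; funext x
      by_cases hx : x ∈ s <;>
        simp [SimpleFunc.piecewise_apply, hx, Set.indicator_of_mem, Set.indicator_of_notMem]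
    rw [hind (μ[f|m]), hind f, integral_indicator (hm s hs), integral_indicator (hm s hs),
      integral_inner (integrable_condExp.integrableOn) c0, integral_inner (hf.integrableOn) c0,
      setIntegral_condExp hm hf hs]
  · intro ψ₁ ψ₂ hdisj h₁ h₂
    have e : ∀ (u : α → H), (fun x => ⟪(ψ₁ + ψ₂) x, u x⟫)
        = fun x => ⟪ψ₁ x, u x⟫ + ⟪ψ₂ x, u x⟫ := by
      intro u; funext x
      have : (ψ₁ + ψ₂) x = ψ₁ x + ψ₂ x := rfl
      rw [this, inner_add_left]
    rw [e (μ[f|m]), e f, integral_add (hint ψ₁ _ integrable_condExp) (hint ψ₂ _ integrable_condExp),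
      integral_add (hint ψ₁ f hf) (hint ψ₂ f hf), h₁, h₂]

theorem aux_integral_inner_condexp {α : Type*} {m m0 : MeasurableSpace α} {μ : Measure α}
    [IsFiniteMeasure μ] (hm : m ≤ m0)
    {H : Type*} [NormedAddCommGroup H] [InnerProductSpace ℝ H] [CompleteSpace H]
    {φ f : α → H} (hφ : StronglyMeasurable[m] φ) {c : ℝ} (hc : 0 ≤ c)
    (hφb : ∀ᵐ x ∂μ, ‖φ x‖ ≤ c) (hf : Integrable f μ) :
    ∫ x, ⟪φ x, f x⟫ ∂μ = ∫ x, ⟪φ x, (μ[f|m]) x⟫ ∂μ := by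
  have hsimp : ∀ (ψ : @SimpleFunc α m H),
      ∫ x, ⟪ψ x, (μ[f|m]) x⟫ ∂μ = ∫ x, ⟪ψ x, f x⟫ ∂μ := aux_inner_simplefunc hm hf
  set fs := hφ.approxBounded c with hfs
  have hfs_tendsto : ∀ᵐ x ∂μ, Tendsto (fun n => fs n x) atTop (𝓝 (φ x)) :=
    hφ.tendsto_approxBounded_ae hφb
  have hfs_bound : ∀ n x, ‖fs n x‖ ≤ c := hφ.norm_approxBounded_le hc
  have hfs_meas : ∀ n, AEStronglyMeasurable (fun x => (fs n x : H)) μ := fun n =>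
    ((@SimpleFunc.stronglyMeasurable α H m _ (fs n)).mono hm).aestronglyMeasurable
  have key : ∀ (g : α → H), Integrable g μ →
      Tendsto (fun n => ∫ x, ⟪fs n x, g x⟫ ∂μ) atTop (𝓝 (∫ x, ⟪φ x, g x⟫ ∂μ)) := by
    intro g hg
    refine tendsto_integral_of_dominated_convergence (fun x => c * ‖g x‖)
      (fun n => ((hfs_meas n).inner (𝕜 := ℝ) (E := H) hg.1)) (hg.norm.const_mul c)
      (fun n => ?_) ?_
    · filter_upwards with x
      exact (norm_inner_le_norm _ _).trans
        (mul_le_mul_of_nonneg_right (hfs_bound n x) (norm_nonneg _))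
    · filter_upwards [hfs_tendsto] with x hx
      exact hx.inner tendsto_const_nhds
  have h1 := key f hf
  have h2 := key (μ[f|m]) integrable_condExp
  have heq : ∀ n, ∫ x, ⟪fs n x, (μ[f|m]) x⟫ ∂μ = ∫ x, ⟪fs n x, f x⟫ ∂μ := fun n => hsimp (fs n)
  refine tendsto_nhds_unique ?_ h2
  simpa only [heq] using h1

/-- The exponential integral we need. -/
theorem aux_exp_integral {τ : ℝ} (hτ : 0 < τ) (t : ℝ) :
    ∫ r in Set.Ioi t, Real.exp (-r / τ) = τ * Real.exp (-t / τ) := by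
  have h1 : ∀ r : ℝ, Real.exp (-r / τ) = Real.exp (-(r * τ⁻¹)) := by
    intro r; rw [div_eq_mul_inv, neg_mul]
  simp_rw [h1]
  rw [integral_comp_mul_right_Ioi (fun x => Real.exp (-x)) t (inv_pos.mpr hτ)]
  rw [integral_exp_neg_Ioi]
  simp [smul_eq_mul, div_eq_mul_inv]

theorem aux_exp_integrableOn {τ : ℝ} (hτ : 0 < τ) (t : ℝ) :
    IntegrableOn (fun r : ℝ => Real.exp (-r / τ)) (Set.Ioi t) := by
  have h1 : ∀ r : ℝ, Real.exp (-r / τ) = Real.exp (-τ⁻¹ * r) := by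
    intro r; rw [div_eq_mul_inv, neg_mul, mul_comm, neg_mul]
  simp_rw [h1]
  exact exp_neg_integrableOn_Ioi t (inv_pos.mpr hτ)

end Aux
/-- **Condition (d) in the proof of Proposition 2.5.** With `v` as in hypotheses
(i)–(iv), the correlation function `r ↦ E[⟨v_0, v_r⟩]` is absolutely integrable on
`[0, ∞)` and `(1/T)·E[‖∫_0^T v_s ds‖²] → 2∫_0^∞ E[⟨v_0, v_r⟩] dr` as `T → ∞`. -/
theorem stmt9
    {H : Type*} [NormedAddCommGroup H] [InnerProductSpace ℝ H] [CompleteSpace H]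
    [SecondCountableTopology H] [MeasurableSpace H] [BorelSpace H]
    {Ω : Type*} {mΩ : MeasurableSpace Ω} (P : Measure Ω) [IsProbabilityMeasure P]
    (C τ : ℝ) (hC : 0 ≤ C) (hτ : 0 < τ)
    (F : ℝ → MeasurableSpace Ω) (v : ℝ → Ω → H)
    (hFmono : Monotone F) (hFle : ∀ t : ℝ, F t ≤ mΩ)
    (hjm : StronglyMeasurable (Function.uncurry v))
    (hnorm : ∀ t : ℝ, ∀ᵐ ω ∂P, ‖v t ω‖ = 1)
    (hadapt : ∀ t : ℝ, StronglyMeasurable[F t] (v t))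
    (hstat : ∀ (s : ℝ) (n : ℕ) (ts : Fin n → ℝ),
      Measure.map (fun ω i => v (ts i + s) ω) P
        = Measure.map (fun ω i => v (ts i) ω) P)
    (hdecay : ∀ s t : ℝ, s ≤ t →
      ∀ᵐ ω ∂P, ‖(P[v t | F s]) ω‖ ≤ C * Real.exp (-(t - s) / τ)) :
    IntegrableOn (fun r : ℝ => ∫ ω, ⟪v 0 ω, v r ω⟫ ∂P) (Set.Ici (0:ℝ)) ∧
    Tendsto (fun T : ℝ => T⁻¹ * ∫ ω, ‖∫ s in (0:ℝ)..T, v s ω‖ ^ 2 ∂P) atTop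
      (nhds (2 * ∫ r in Set.Ioi (0:ℝ), (∫ ω, ⟪v 0 ω, v r ω⟫ ∂P))) := by
  classical
  set Φ : ℝ → ℝ := fun r => ∫ ω, ⟪v 0 ω, v r ω⟫ ∂P with hΦdef
  -- measurability of each v t
  have hmeas_t : ∀ t : ℝ, StronglyMeasurable (v t) := fun t =>
    hjm.comp_measurable (measurable_const.prodMk measurable_id)
  have hint_t : ∀ t : ℝ, Integrable (v t) P := by
    intro t
    refine (integrable_const (1:ℝ)).mono' (hmeas_t t).aestronglyMeasurable ?_
    filter_upwards [hnorm t] with ω h using le_of_eq h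
  -- each inner product is integrable
  have hinner_int : ∀ a b : ℝ, Integrable (fun ω => ⟪v a ω, v b ω⟫) P := by
    intro a b
    refine (integrable_const (1:ℝ)).mono'
      ((hmeas_t a).aestronglyMeasurable.inner (𝕜 := ℝ) (E := H)
        (hmeas_t b).aestronglyMeasurable) ?_
    filter_upwards [hnorm a, hnorm b] with ω ha hb
    calc ‖⟪v a ω, v b ω⟫‖ ≤ ‖v a ω‖ * ‖v b ω‖ := norm_inner_le_norm _ _
    _ = 1 := by rw [ha, hb, one_mul]
  -- |Φ| ≤ 1
  have hΦle1 : ∀ r, |Φ r| ≤ 1 := by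
    intro r
    rw [← Real.norm_eq_abs]
    refine (norm_integral_le_of_norm_le (integrable_const 1) ?_).trans (by simp)
    filter_upwards [hnorm 0, hnorm r] with ω h0 hr
    calc ‖⟪v 0 ω, v r ω⟫‖ ≤ ‖v 0 ω‖ * ‖v r ω‖ := norm_inner_le_norm _ _
    _ = 1 := by rw [h0, hr, one_mul]
  -- measurability of Φ
  have hΦmeas : StronglyMeasurable Φ := by
    have h1 : StronglyMeasurable (fun p : ℝ × Ω => ⟪v 0 p.2, v p.1 p.2⟫) :=
      ((hmeas_t 0).comp_measurable measurable_snd).inner (𝕜 := ℝ) (E := H) hjm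
    exact h1.integral_prod_right'
  -- decay bound on Φ
  have hΦbound : ∀ r : ℝ, 0 ≤ r → |Φ r| ≤ C * Real.exp (-r / τ) := by
    intro r hr
    haveI : SigmaFinite (P.trim (hFle 0)) := by infer_instance
    have key : Φ r = ∫ ω, ⟪v 0 ω, (P[v r | F 0]) ω⟫ ∂P := by
      refine aux_integral_inner_condexp (hFle 0) (hadapt 0) zero_le_one ?_ (hint_t r)
      filter_upwards [hnorm 0] with ω h using le_of_eq h
    rw [key, ← Real.norm_eq_abs]
    refine (norm_integral_le_of_norm_le (integrable_const (C * Real.exp (-r / τ))) ?_).trans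
      (by simp)
    filter_upwards [hnorm 0, hdecay 0 r hr] with ω h0 hd
    calc ‖⟪v 0 ω, (P[v r | F 0]) ω⟫‖ ≤ ‖v 0 ω‖ * ‖(P[v r | F 0]) ω‖ := norm_inner_le_norm _ _
    _ ≤ 1 * (C * Real.exp (-(r - 0) / τ)) := by
        rw [h0]; exact mul_le_mul_of_nonneg_left hd zero_le_one
    _ = C * Real.exp (-r / τ) := by rw [one_mul, sub_zero]
  -- integrability of Φ on [0, ∞)
  have hΦint : IntegrableOn Φ (Set.Ici (0:ℝ)) := by
    have hb : IntegrableOn (fun r : ℝ => C * Real.exp (-r / τ)) (Set.Ici (0:ℝ)) := by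
      rw [integrableOn_Ici_iff_integrableOn_Ioi]
      exact (aux_exp_integrableOn hτ 0).const_mul C
    refine hb.mono' (hΦmeas.aestronglyMeasurable.restrict) ?_
    rw [ae_restrict_iff' measurableSet_Ici]
    filter_upwards with r hr
    rw [Real.norm_eq_abs]
    exact hΦbound r hr
  have hΦintIoi : IntegrableOn Φ (Set.Ioi (0:ℝ)) := hΦint.mono_set Set.Ioi_subset_Ici_self
  -- stationarity: pair correlation
  have hshift : ∀ a b : ℝ, ∫ ω, ⟪v a ω, v b ω⟫ ∂P = Φ (b - a) := by
    intro a b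
    set ts : Fin 2 → ℝ := ![0, b - a] with hts
    have hmap := hstat a 2 ts
    set G : (Fin 2 → H) → ℝ := fun u => ⟪u 0, u 1⟫ with hG
    have hGcont : Continuous G := Continuous.inner (continuous_apply _) (continuous_apply _)
    have hT1 : Measurable fun ω => (fun i => v (ts i + a) ω) :=
      measurable_pi_lambda _ (fun i => (hmeas_t _).measurable)
    have hT0 : Measurable fun ω => (fun i => v (ts i) ω) :=
      measurable_pi_lambda _ (fun i => (hmeas_t _).measurable)
    have e1 : ∫ ω, ⟪v a ω, v b ω⟫ ∂P = ∫ ω, G (fun i => v (ts i + a) ω) ∂P := by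
      refine integral_congr_ae (Filter.Eventually.of_forall fun ω => ?_)
      simp [hG, hts]
    have e2 : Φ (b - a) = ∫ ω, G (fun i => v (ts i) ω) ∂P := by
      refine integral_congr_ae (Filter.Eventually.of_forall fun ω => ?_)
      simp [hG, hts]
    rw [e1, e2,
      ← integral_map hT1.aemeasurable
        (hGcont.stronglyMeasurable.aestronglyMeasurable),
      ← integral_map hT0.aemeasurable
        (hGcont.stronglyMeasurable.aestronglyMeasurable),
      hmap]

  -- evenness
  have hΦeven : ∀ r : ℝ, Φ (-r) = Φ r := by
    intro r
    have h1 : Φ (-r) = ∫ ω, ⟪v (-r) ω, v 0 ω⟫ ∂P := by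
      rw [hΦdef]; simp only
      congr 1; funext ω; exact real_inner_comm _ _
    rw [h1, hshift (-r) 0]
    norm_num
  refine ⟨hΦint, ?_⟩
  -- a.e. ω, a.e. t, the norm is 1
  have hgood : ∀ᵐ ω ∂P, ∀ᵐ t ∂(volume : Measure ℝ), ‖v t ω‖ = 1 := by
    have hsm : StronglyMeasurable (fun x : Ω × ℝ => v x.2 x.1) :=
      hjm.comp_measurable (measurable_snd.prodMk measurable_fst)
    have hmeasset : MeasurableSet {x : Ω × ℝ | ‖v x.2 x.1‖ = 1} :=
      hsm.norm.measurable (measurableSet_singleton 1)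
    exact (Measure.ae_ae_comm hmeasset).mpr
      (Filter.Eventually.of_forall fun t => hnorm t)
  -- interval integrability of Φ
  have hIocFin : ∀ a b : ℝ, IsFiniteMeasure (volume.restrict (Set.Ioc a b)) := fun a b =>
    ⟨by rw [Measure.restrict_apply_univ]; exact measure_Ioc_lt_top⟩
  have hΦii : ∀ a b : ℝ, IntervalIntegrable Φ volume a b := by
    intro a b
    have key : ∀ a b : ℝ, IntegrableOn Φ (Set.Ioc a b) := by
      intro a b
      haveI := hIocFin a b
      refine (integrable_const (1:ℝ)).mono' hΦmeas.aestronglyMeasurable.restrict ?_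
      filter_upwards with r
      rw [Real.norm_eq_abs]; exact hΦle1 r
    exact ⟨key a b, key b a⟩
  set G : ℝ → ℝ := fun x => ∫ u in (0:ℝ)..x, Φ u with hGdef
  have hGcont : Continuous G := intervalIntegral.continuous_primitive hΦii 0
  set M : ℝ := ∫ r in Set.Ioi (0:ℝ), Φ r with hMdef
  -- |G s - M| decay
  have hGM : ∀ s : ℝ, 0 ≤ s → |G s - M| ≤ C * τ * Real.exp (-s / τ) := by
    intro s hs
    have hsplit : M = (∫ r in Set.Ioc (0:ℝ) s, Φ r) + ∫ r in Set.Ioi s, Φ r := by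
      rw [hMdef, ← Set.Ioc_union_Ioi_eq_Ioi hs,
        setIntegral_union (Set.Ioc_disjoint_Ioi le_rfl) measurableSet_Ioi
          (hΦintIoi.mono_set Set.Ioc_subset_Ioi_self)
          (hΦintIoi.mono_set (Set.Ioi_subset_Ioi hs))]
    have hGs : G s = ∫ r in Set.Ioc (0:ℝ) s, Φ r := by
      rw [hGdef]; exact intervalIntegral.integral_of_le hs
    have habs : |G s - M| = |∫ r in Set.Ioi s, Φ r| := by
      rw [hGs, hsplit]; rw [abs_sub_comm]; congr 1; ring
    rw [habs, ← Real.norm_eq_abs]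
    have hb : ∀ᵐ r ∂(volume.restrict (Set.Ioi s)), ‖Φ r‖ ≤ C * Real.exp (-r / τ) := by
      rw [ae_restrict_iff' measurableSet_Ioi]
      filter_upwards with r hr
      rw [Real.norm_eq_abs]
      exact hΦbound r (hs.trans (le_of_lt hr))
    refine (norm_integral_le_of_norm_le ((aux_exp_integrableOn hτ s).const_mul C) hb).trans ?_
    rw [integral_const_mul, aux_exp_integral hτ s]
    exact le_of_eq (by ring)
  -- main identity
  have hE : ∀ T : ℝ, 0 < T →
      ∫ ω, ‖∫ s in (0:ℝ)..T, v s ω‖ ^ 2 ∂P = 2 * ∫ s in (0:ℝ)..T, G s := by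
    intro T hT
    set μT : Measure ℝ := volume.restrict (Set.Ioc 0 T) with hμT
    haveI : IsFiniteMeasure μT := hIocFin 0 T
    have hsec : ∀ ω, StronglyMeasurable (fun t => v t ω) := fun ω =>
      hjm.comp_measurable (measurable_id.prodMk measurable_const)
    have hsm2 : ∀ ω : Ω, StronglyMeasurable (fun p : ℝ × ℝ => ⟪v p.1 ω, v p.2 ω⟫) := fun ω =>
      ((hsec ω).comp_measurable measurable_fst).inner (𝕜 := ℝ) (E := H)
        ((hsec ω).comp_measurable measurable_snd)
    -- step 1
    have step1 : ∀ᵐ ω ∂P, ‖∫ s in (0:ℝ)..T, v s ω‖ ^ 2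
        = ∫ p, ⟪v p.1 ω, v p.2 ω⟫ ∂(μT.prod μT) := by
      filter_upwards [hgood] with ω hω
      have hωT : ∀ᵐ t ∂μT, ‖v t ω‖ = 1 := ae_restrict_of_ae hω
      have hvint : Integrable (fun t => v t ω) μT := by
        refine (integrable_const (1:ℝ)).mono' (hsec ω).aestronglyMeasurable.restrict ?_
        filter_upwards [hωT] with t ht using le_of_eq ht
      have hX : (∫ s in (0:ℝ)..T, v s ω) = ∫ t, v t ω ∂μT :=
        intervalIntegral.integral_of_le hT.le
      have hprodset : MeasurableSet {p : ℝ × ℝ | ‖v p.1 ω‖ = 1 ∧ ‖v p.2 ω‖ = 1} := by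
        have m1 : Measurable fun p : ℝ × ℝ => ‖v p.1 ω‖ :=
          ((hsec ω).norm.measurable).comp measurable_fst
        have m2 : Measurable fun p : ℝ × ℝ => ‖v p.2 ω‖ :=
          ((hsec ω).norm.measurable).comp measurable_snd
        exact (m1 (measurableSet_singleton 1)).inter (m2 (measurableSet_singleton 1))
      have hFub : Integrable (fun p : ℝ × ℝ => ⟪v p.1 ω, v p.2 ω⟫) (μT.prod μT) := by
        refine (integrable_const (1:ℝ)).mono' (hsm2 ω).aestronglyMeasurable ?_
        have hae : ∀ᵐ p ∂(μT.prod μT), ‖v p.1 ω‖ = 1 ∧ ‖v p.2 ω‖ = 1 := by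
          refine (Measure.ae_prod_iff_ae_ae hprodset).mpr ?_
          filter_upwards [hωT] with s hs
          filter_upwards [hωT] with t ht
          exact ⟨hs, ht⟩
        filter_upwards [hae] with p hp
        calc ‖⟪v p.1 ω, v p.2 ω⟫‖ ≤ ‖v p.1 ω‖ * ‖v p.2 ω‖ := norm_inner_le_norm _ _
        _ = 1 := by rw [hp.1, hp.2, one_mul]
      calc ‖∫ s in (0:ℝ)..T, v s ω‖ ^ 2 = ⟪∫ t, v t ω ∂μT, ∫ t, v t ω ∂μT⟫ := by
            rw [hX, real_inner_self_eq_norm_sq]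
      _ = ∫ s, ⟪∫ t, v t ω ∂μT, v s ω⟫ ∂μT := by
            rw [integral_inner hvint]
      _ = ∫ s, ∫ t, ⟪v s ω, v t ω⟫ ∂μT ∂μT := by
            refine integral_congr_ae (Filter.Eventually.of_forall fun s => ?_)
            show ⟪∫ t, v t ω ∂μT, v s ω⟫ = ∫ t, ⟪v s ω, v t ω⟫ ∂μT
            rw [real_inner_comm, integral_inner hvint (v s ω)]
      _ = ∫ p, ⟪v p.1 ω, v p.2 ω⟫ ∂(μT.prod μT) := (integral_prod _ hFub).symm
    -- step 2
    have hsm3 : StronglyMeasurable (fun q : Ω × (ℝ × ℝ) => ⟪v q.2.1 q.1, v q.2.2 q.1⟫) :=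
      (hjm.comp_measurable ((measurable_snd.fst).prodMk measurable_fst)).inner
        (𝕜 := ℝ) (E := H)
        (hjm.comp_measurable ((measurable_snd.snd).prodMk measurable_fst))
    have hqset : MeasurableSet {q : Ω × (ℝ × ℝ) | ‖v q.2.1 q.1‖ = 1 ∧ ‖v q.2.2 q.1‖ = 1} := by
      have m1 : Measurable fun q : Ω × (ℝ × ℝ) => ‖v q.2.1 q.1‖ :=
        (hjm.comp_measurable ((measurable_snd.fst).prodMk measurable_fst)).norm.measurable
      have m2 : Measurable fun q : Ω × (ℝ × ℝ) => ‖v q.2.2 q.1‖ :=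
        (hjm.comp_measurable ((measurable_snd.snd).prodMk measurable_fst)).norm.measurable
      exact (m1 (measurableSet_singleton 1)).inter (m2 (measurableSet_singleton 1))
    have hFub2 : Integrable (Function.uncurry fun (ω : Ω) (p : ℝ × ℝ) => ⟪v p.1 ω, v p.2 ω⟫)
        (P.prod (μT.prod μT)) := by
      refine (integrable_const (1:ℝ)).mono' hsm3.aestronglyMeasurable ?_
      have hae : ∀ᵐ q ∂(P.prod (μT.prod μT)), ‖v q.2.1 q.1‖ = 1 ∧ ‖v q.2.2 q.1‖ = 1 := by
        refine (Measure.ae_prod_iff_ae_ae hqset).mpr ?_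
        filter_upwards [hgood] with ω hω
        have hωT : ∀ᵐ t ∂μT, ‖v t ω‖ = 1 := ae_restrict_of_ae hω
        have hprodset : MeasurableSet {p : ℝ × ℝ | ‖v p.1 ω‖ = 1 ∧ ‖v p.2 ω‖ = 1} := by
          have m1 : Measurable fun p : ℝ × ℝ => ‖v p.1 ω‖ :=
            ((hsec ω).norm.measurable).comp measurable_fst
          have m2 : Measurable fun p : ℝ × ℝ => ‖v p.2 ω‖ :=
            ((hsec ω).norm.measurable).comp measurable_snd
          exact (m1 (measurableSet_singleton 1)).inter (m2 (measurableSet_singleton 1))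
        refine (Measure.ae_prod_iff_ae_ae hprodset).mpr ?_
        filter_upwards [hωT] with s hs
        filter_upwards [hωT] with t ht
        exact ⟨hs, ht⟩
      filter_upwards [hae] with q hq
      calc ‖⟪v q.2.1 q.1, v q.2.2 q.1⟫‖ ≤ ‖v q.2.1 q.1‖ * ‖v q.2.2 q.1‖ := norm_inner_le_norm _ _
      _ = 1 := by rw [hq.1, hq.2, one_mul]
    have step2 : ∫ ω, (∫ p, ⟪v p.1 ω, v p.2 ω⟫ ∂(μT.prod μT)) ∂P
        = ∫ p, Φ (p.2 - p.1) ∂(μT.prod μT) := by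
      rw [integral_integral_swap hFub2]
      refine integral_congr_ae (Filter.Eventually.of_forall fun p => ?_)
      exact hshift p.1 p.2
    -- step 3
    have hΦprod_int : Integrable (fun p : ℝ × ℝ => Φ (p.2 - p.1)) (μT.prod μT) := by
      refine (integrable_const (1:ℝ)).mono'
        ((hΦmeas.comp_measurable (measurable_snd.sub measurable_fst)).aestronglyMeasurable) ?_
      filter_upwards with p
      rw [Real.norm_eq_abs]; exact hΦle1 _
    have step3 : ∫ p, Φ (p.2 - p.1) ∂(μT.prod μT) = ∫ s, (G s + G (T - s)) ∂μT := by
      rw [integral_prod _ hΦprod_int]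
      refine integral_congr_ae (Filter.Eventually.of_forall fun s => ?_)
      have h1 : ∫ t, Φ (t - s) ∂μT = ∫ t in (0:ℝ)..T, Φ (t - s) :=
        (intervalIntegral.integral_of_le hT.le).symm
      have h2 : (∫ x in (0 - s)..(T - s), Φ x)
          = (∫ x in (0 - s)..(0:ℝ), Φ x) + ∫ x in (0:ℝ)..(T - s), Φ x :=
        (intervalIntegral.integral_add_adjacent_intervals (hΦii _ _) (hΦii _ _)).symm
      have h3 : (∫ x in (0 - s)..(0:ℝ), Φ x) = G s := by
        have hneg : (∫ x in (0:ℝ)..s, Φ (-x)) = ∫ x in (-s)..(-(0:ℝ)), Φ x :=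
          intervalIntegral.integral_comp_neg (fun x => Φ x)
        have heven : (∫ x in (0:ℝ)..s, Φ (-x)) = ∫ x in (0:ℝ)..s, Φ x :=
          intervalIntegral.integral_congr (fun x _ => hΦeven x)
        calc (∫ x in (0 - s)..(0:ℝ), Φ x) = ∫ x in (-s)..(-(0:ℝ)), Φ x := by norm_num
        _ = ∫ x in (0:ℝ)..s, Φ (-x) := hneg.symm
        _ = ∫ x in (0:ℝ)..s, Φ x := heven
        _ = G s := rfl
      simp only
      rw [h1, intervalIntegral.integral_comp_sub_right (fun u => Φ u) s, h2, h3, hGdef]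
    -- step 4
    have step4 : ∫ s, (G s + G (T - s)) ∂μT = 2 * ∫ s in (0:ℝ)..T, G s := by
      have h1 : ∫ s, (G s + G (T - s)) ∂μT = ∫ s in (0:ℝ)..T, (G s + G (T - s)) :=
        (intervalIntegral.integral_of_le hT.le).symm
      have hcont2 : Continuous fun s : ℝ => G (T - s) :=
        hGcont.comp (continuous_const.sub continuous_id)
      rw [h1, intervalIntegral.integral_add (hGcont.intervalIntegrable 0 T)
        (hcont2.intervalIntegrable 0 T)]
      have h2 : (∫ s in (0:ℝ)..T, G (T - s)) = ∫ s in (0:ℝ)..T, G s := by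
        rw [intervalIntegral.integral_comp_sub_left G T, sub_self, sub_zero]
      rw [h2]; ring
    calc ∫ ω, ‖∫ s in (0:ℝ)..T, v s ω‖ ^ 2 ∂P
        = ∫ ω, (∫ p, ⟪v p.1 ω, v p.2 ω⟫ ∂(μT.prod μT)) ∂P := integral_congr_ae step1
    _ = ∫ p, Φ (p.2 - p.1) ∂(μT.prod μT) := step2
    _ = ∫ s, (G s + G (T - s)) ∂μT := step3
    _ = 2 * ∫ s in (0:ℝ)..T, G s := step4
  -- squeeze
  have hbnd : ∀ᶠ T in atTop,
      ‖T⁻¹ * (∫ ω, ‖∫ s in (0:ℝ)..T, v s ω‖ ^ 2 ∂P) - 2 * M‖ ≤ (2 * (C * τ * τ)) * T⁻¹ := by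
    filter_upwards [eventually_gt_atTop (0:ℝ)] with T hT
    rw [hE T hT]
    have h1 : T⁻¹ * (2 * ∫ s in (0:ℝ)..T, G s) - 2 * M
        = (2 * T⁻¹) * ∫ s in (0:ℝ)..T, (G s - M) := by
      rw [intervalIntegral.integral_sub (hGcont.intervalIntegrable 0 T)
        (intervalIntegrable_const)]
      rw [intervalIntegral.integral_const]
      have hTne : T ≠ 0 := ne_of_gt hT
      field_simp
      ring
    rw [h1, Real.norm_eq_abs, abs_mul]
    have habs1 : |2 * T⁻¹| = 2 * T⁻¹ := abs_of_pos (by positivity)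
    have hGMcont : Continuous fun s => |G s - M| := (hGcont.sub continuous_const).abs
    have hexpcont : Continuous fun s : ℝ => C * τ * Real.exp (-s / τ) :=
      continuous_const.mul (Real.continuous_exp.comp (continuous_neg.div_const τ))
    have h2 : |∫ s in (0:ℝ)..T, (G s - M)| ≤ ∫ s in (0:ℝ)..T, |G s - M| :=
      intervalIntegral.abs_integral_le_integral_abs hT.le
    have h3 : (∫ s in (0:ℝ)..T, |G s - M|) ≤ ∫ s in (0:ℝ)..T, C * τ * Real.exp (-s / τ) := by
      refine intervalIntegral.integral_mono_on hT.le (hGMcont.intervalIntegrable 0 T)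
        (hexpcont.intervalIntegrable 0 T) ?_
      intro x hx
      exact hGM x hx.1
    have h4 : (∫ s in (0:ℝ)..T, C * τ * Real.exp (-s / τ)) ≤ C * τ * τ := by
      rw [intervalIntegral.integral_of_le hT.le]
      have hsub : (∫ s in Set.Ioc (0:ℝ) T, C * τ * Real.exp (-s / τ))
          ≤ ∫ s in Set.Ioi (0:ℝ), C * τ * Real.exp (-s / τ) := by
        refine setIntegral_mono_set ((aux_exp_integrableOn hτ 0).const_mul (C * τ)) ?_ ?_
        · filter_upwards with s
          positivity
        · exact Filter.Eventually.of_forall Set.Ioc_subset_Ioi_self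
      refine hsub.trans ?_
      rw [integral_const_mul, aux_exp_integral hτ 0]
      rw [neg_zero, zero_div, Real.exp_zero, mul_one]
    calc |2 * T⁻¹| * |∫ s in (0:ℝ)..T, (G s - M)|
        ≤ (2 * T⁻¹) * (C * τ * τ) := by
          rw [habs1]
          exact mul_le_mul_of_nonneg_left (h2.trans (h3.trans h4)) (by positivity)
    _ = (2 * (C * τ * τ)) * T⁻¹ := by ring
  have hlim0 : Tendsto (fun T : ℝ => (2 * (C * τ * τ)) * T⁻¹) atTop (𝓝 0) := by
    simpa using tendsto_inv_atTop_zero.const_mul (2 * (C * τ * τ))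
  have hzero : Tendsto (fun T : ℝ =>
      T⁻¹ * (∫ ω, ‖∫ s in (0:ℝ)..T, v s ω‖ ^ 2 ∂P) - 2 * M) atTop (𝓝 0) :=
    squeeze_zero_norm' hbnd hlim0
  have := hzero.add_const (2 * M)
  simpa using this
end

section
/- Under hypotheses (i)–(iv) on the process v, let ℓ and ℓ' be continuous linear functionals on H. Then the function t ↦ E[ℓ(v_0)ℓ'(v_t)] is absolutely integrable on [0, ∞), and lim_{T→∞} (1/T) · E[ ( ∫_0^T ℓ(v_s) ds ) ( ∫_0^T ℓ'(v_s) ds ) ] = ∫_0^∞ E[ ℓ(v_0)ℓ'(v_t) + ℓ'(v_0)ℓ(v_t) ] dt. -/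
/-!
Stationarity makes `E[ℓ(v_s) ℓ'(v_u)]` a function `k (u - s)` of the lag alone, so by Fubini
`T⁻¹ E[(∫_0^T ℓ(v_s) ds)(∫_0^T ℓ'(v_s) ds)] = ∫ (1 - |t|/T)₊ k(t) dt`, which tends to `∫_ℝ k` by
dominated convergence. Conditioning on `F_0` gives `k t = E[ℓ(v_0) ℓ'(E[v_t | F_0])]`, so the
decorrelation bound yields `|k t| ≤ C ‖ℓ‖ ‖ℓ'‖ exp (-|t|/τ)` and `k` is integrable. Finally
`k (-t) = E[ℓ'(v_0) ℓ(v_t)]`, again by stationarity, folds `∫_ℝ k` onto the half line.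
-/

open MeasureTheory Filter Set

section Analysis

variable {E : Type*} [NormedAddCommGroup E] [NormedSpace ℝ E]

theorem integrable_exp_neg_abs_div {τ : ℝ} (hτ : 0 < τ) :
    Integrable fun t : ℝ => Real.exp (-|t| / τ) := by
  have hIic : IntegrableOn (fun t : ℝ => Real.exp (-|t| / τ)) (Iic 0) :=
    (integrableOn_exp_mul_Iic (inv_pos.2 hτ) 0).congr_fun
      (fun t ht => by rw [abs_of_nonpos ht, neg_neg, div_eq_inv_mul]) measurableSet_Iic
  have hIoi : IntegrableOn (fun t : ℝ => Real.exp (-|t| / τ)) (Ioi 0) :=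
    (integrableOn_exp_mul_Ioi (neg_lt_zero.2 (inv_pos.2 hτ)) 0).congr_fun
      (fun t ht => by simp [abs_of_pos (mem_Ioi.1 ht), div_eq_inv_mul]) measurableSet_Ioi
  simpa using hIic.union hIoi

theorem integral_Ioi_add_comp_neg {f : ℝ → E} (hf : Integrable f) :
    ∫ t in Ioi 0, (f t + f (-t)) = ∫ t, f t := by
  rw [integral_add hf.integrableOn hf.comp_neg.integrableOn, integral_comp_neg_Ioi, neg_zero,
    ← compl_Iic, add_comm, integral_add_compl measurableSet_Iic hf]

theorem integral_Ioc_integral_Ioc_comp_sub [CompleteSpace E] {k : ℝ → E} (hk : Integrable k)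
    (T : ℝ) :
    ∫ s in Ioc 0 T, ∫ u in Ioc 0 T, k (u - s) = ∫ t, max (T - |t|) 0 • k t := by
  have htranslate : ∀ s, ∫ u in Ioc 0 T, k (u - s) = ∫ t, (Ioc (-s) (T - s)).indicator k t := by
    intro s
    rw [integral_indicator measurableSet_Ioc]
    simpa using (measurePreserving_sub_right volume s).setIntegral_preimage_emb
      (measurableEmbedding_subRight s) k (Ioc (-s) (T - s))
  have hint : Integrable (Function.uncurry fun s t => (Ioc (-s) (T - s)).indicator k t)
      ((volume.restrict (Ioc 0 T)).prod volume) := by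
    have hset : MeasurableSet {p : ℝ × ℝ | p.2 ∈ Ioc (-p.1) (T - p.1)} :=
      (measurableSet_lt measurable_fst.neg measurable_snd).inter
        (measurableSet_le measurable_snd (measurable_const.sub measurable_fst))
    exact ((hk.comp_snd _).indicator hset).congr (ae_of_all _ fun p => rfl)
  have hlength : ∀ t, volume.real (Ioc 0 T ∩ Ioc (-t) (T - t)) = max (T - |t|) 0 := by
    intro t
    rw [Ioc_inter_Ioc, Real.volume_real_Ioc]
    rcases le_total 0 t with ht | ht
    · rw [abs_of_nonneg ht, max_eq_left (neg_nonpos.2 ht), min_eq_right (by linarith), sub_zero]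
    · rw [abs_of_nonpos ht, max_eq_right (neg_nonneg.2 ht), min_eq_left (by linarith)]
  simp_rw [htranslate]
  rw [integral_integral_swap hint]
  refine integral_congr_ae (ae_of_all _ fun t => ?_)
  have hflip : ∀ s,
      (Ioc (-s) (T - s)).indicator k t = (Ioc (-t) (T - t)).indicator (fun _ => k t) s := by
    intro s
    simp only [indicator_apply, mem_Ioc, neg_lt, le_sub_comm]
  simp_rw [hflip]
  rw [setIntegral_indicator measurableSet_Ioc, setIntegral_const, hlength]

theorem tendsto_inv_smul_integral_Ioc_integral_Ioc_comp_sub [CompleteSpace E] {k : ℝ → E}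
    (hk : Integrable k) :
    Tendsto (fun T : ℝ => T⁻¹ • ∫ s in Ioc 0 T, ∫ u in Ioc 0 T, k (u - s)) atTop
      (nhds (∫ t, k t)) := by
  simp_rw [integral_Ioc_integral_Ioc_comp_sub hk, ← integral_smul, smul_smul]
  refine tendsto_integral_filter_of_dominated_convergence (fun t => ‖k t‖)
    (Eventually.of_forall fun T => ?_) ?_ hk.norm (ae_of_all _ fun t => ?_)
  · exact (Continuous.aestronglyMeasurable (by fun_prop)).smul hk.1
  · filter_upwards [eventually_gt_atTop 0] with T hT
    refine ae_of_all _ fun t => ?_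
    have hw : T⁻¹ * max (T - |t|) 0 ≤ 1 := by
      rw [inv_mul_le_iff₀ hT, mul_one]
      exact max_le (by linarith [abs_nonneg t]) hT.le
    rw [norm_smul, Real.norm_of_nonneg (by positivity)]
    exact mul_le_of_le_one_left (norm_nonneg _) hw
  · have hw : Tendsto (fun T : ℝ => T⁻¹ * max (T - |t|) 0) atTop (nhds 1) := by
      have hlim : Tendsto (fun T : ℝ => 1 - |t| * T⁻¹) atTop (nhds 1) := by
        simpa using tendsto_const_nhds.sub (tendsto_inv_atTop_zero.const_mul |t|)
      refine hlim.congr' ?_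
      filter_upwards [eventually_gt_atTop |t|] with T hT
      have hT0 : 0 < T := (abs_nonneg t).trans_lt hT
      rw [max_eq_left (by linarith)]
      field_simp
    simpa using hw.smul_const (k t)

end Analysis

section Correlation

variable {H : Type*} [NormedAddCommGroup H] [NormedSpace ℝ H]
  {Ω : Type*} {mΩ : MeasurableSpace Ω} {P : Measure Ω}

theorem norm_clm_apply_mul_clm_apply_le (L L' : H →L[ℝ] ℝ) {x y : H} {a b : ℝ}
    (hx : ‖x‖ ≤ a) (hy : ‖y‖ ≤ b) : ‖L x * L' y‖ ≤ ‖L‖ * ‖L'‖ * (a * b) := by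
  have ha : 0 ≤ a := (norm_nonneg x).trans hx
  calc ‖L x * L' y‖ = ‖L x‖ * ‖L' y‖ := norm_mul _ _
    _ ≤ (‖L‖ * a) * (‖L'‖ * b) :=
      mul_le_mul (L.le_opNorm_of_le hx) (L'.le_opNorm_of_le hy) (norm_nonneg _) (by positivity)
    _ = ‖L‖ * ‖L'‖ * (a * b) := by ring

theorem integrable_clm_comp_mul_clm_comp [IsFiniteMeasure P] (L L' : H →L[ℝ] ℝ) {X Y : Ω → H}
    (hX : AEStronglyMeasurable X P) (hY : AEStronglyMeasurable Y P)
    (hXb : ∀ᵐ ω ∂P, ‖X ω‖ ≤ 1) (hYb : ∀ᵐ ω ∂P, ‖Y ω‖ ≤ 1) :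
    Integrable (fun ω => L (X ω) * L' (Y ω)) P :=
  Integrable.of_bound ((L.continuous.comp_aestronglyMeasurable hX).mul
      (L'.continuous.comp_aestronglyMeasurable hY)) _
    (by filter_upwards [hXb, hYb] with ω hx hy using norm_clm_apply_mul_clm_apply_le L L' hx hy)

theorem abs_integral_clm_comp_mul_clm_comp_le [CompleteSpace H] [IsProbabilityMeasure P]
    (L L' : H →L[ℝ] ℝ) {X Y : Ω → H} (hY : AEStronglyMeasurable Y P)
    (hXb : ∀ᵐ ω ∂P, ‖X ω‖ ≤ 1) (hYb : ∀ᵐ ω ∂P, ‖Y ω‖ ≤ 1)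
    {m : MeasurableSpace Ω} (hm : m ≤ mΩ) (hX : StronglyMeasurable[m] X) {c : ℝ}
    (hc : ∀ᵐ ω ∂P, ‖P[Y | m] ω‖ ≤ c) :
    |∫ ω, L (X ω) * L' (Y ω) ∂P| ≤ ‖L‖ * ‖L'‖ * c := by
  have hYint : Integrable Y P := Integrable.of_bound hY 1 hYb
  have hpull : P[fun ω => L (X ω) * L' (Y ω) | m] =ᵐ[P] fun ω => L (X ω) * L' (P[Y | m] ω) := by
    filter_upwards [condExp_mul_of_stronglyMeasurable_left (L.continuous.comp_stronglyMeasurable hX)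
        (integrable_clm_comp_mul_clm_comp L L' (hX.mono hm).aestronglyMeasurable hY hXb hYb)
        (L'.integrable_comp hYint), L'.comp_condExp_comm hYint (m := m)] with ω hmul hcomm
    exact hmul.trans (congrArg (L (X ω) * ·) hcomm.symm)
  calc |∫ ω, L (X ω) * L' (Y ω) ∂P| = ‖∫ ω, L (X ω) * L' (P[Y | m] ω) ∂P‖ := by
        rw [← integral_condExp hm, integral_congr_ae hpull, Real.norm_eq_abs]
    _ ≤ ‖L‖ * ‖L'‖ * (1 * c) * P.real univ := norm_integral_le_of_norm_le_const (by
        filter_upwards [hXb, hc] with ω hx hy using norm_clm_apply_mul_clm_apply_le L L' hx hy)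
    _ = ‖L‖ * ‖L'‖ * c := by rw [probReal_univ, one_mul, mul_one]

noncomputable def crossCorrelation (P : Measure Ω) (v : ℝ → Ω → H) (L L' : H →L[ℝ] ℝ) (t : ℝ) : ℝ :=
  ∫ ω, L (v 0 ω) * L' (v t ω) ∂P

variable {v : ℝ → Ω → H}

theorem abs_crossCorrelation_le_of_nonneg [CompleteSpace H] [IsProbabilityMeasure P]
    (hv : ∀ t, StronglyMeasurable (v t)) (hnorm : ∀ t, ∀ᵐ ω ∂P, ‖v t ω‖ ≤ 1)
    {m : MeasurableSpace Ω} (hm : m ≤ mΩ) (hv₀ : StronglyMeasurable[m] (v 0)) {C τ : ℝ}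
    (hdecay : ∀ t, 0 ≤ t → ∀ᵐ ω ∂P, ‖P[v t | m] ω‖ ≤ C * Real.exp (-t / τ))
    (L L' : H →L[ℝ] ℝ) {t : ℝ} (ht : 0 ≤ t) :
    |crossCorrelation P v L L' t| ≤ ‖L‖ * ‖L'‖ * (C * Real.exp (-t / τ)) :=
  abs_integral_clm_comp_mul_clm_comp_le L L' (hv t).aestronglyMeasurable (hnorm 0) (hnorm t) hm hv₀
    (hdecay t ht)

theorem stronglyMeasurable_crossCorrelation [SFinite P]
    (hjm : StronglyMeasurable (Function.uncurry v)) (L L' : H →L[ℝ] ℝ) :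
    StronglyMeasurable (crossCorrelation P v L L') :=
  StronglyMeasurable.integral_prod_right' (f := fun p : ℝ × Ω => L (v 0 p.2) * L' (v p.1 p.2))
    ((L.continuous.comp_stronglyMeasurable
      (hjm.comp_measurable (measurable_const.prodMk measurable_snd))).mul
      (L'.continuous.comp_stronglyMeasurable hjm))

theorem integral_intervalIntegral_mul_intervalIntegral [IsFiniteMeasure P]
    (hjm : StronglyMeasurable (Function.uncurry v)) (hnorm : ∀ t, ∀ᵐ ω ∂P, ‖v t ω‖ ≤ 1)
    (L L' : H →L[ℝ] ℝ) {T : ℝ} (hT : 0 ≤ T) :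
    ∫ ω, (∫ s in 0..T, L (v s ω)) * (∫ s in 0..T, L' (v s ω)) ∂P
      = ∫ s in Ioc 0 T, ∫ u in Ioc 0 T, ∫ ω, L (v s ω) * L' (v u ω) ∂P := by
  set μ := volume.restrict (Ioc (0 : ℝ) T)
  have hv : ∀ t, StronglyMeasurable (v t) := fun t => hjm.comp_measurable measurable_prodMk_left
  set G : Ω × ℝ × ℝ → ℝ := fun q => L (v q.2.1 q.1) * L' (v q.2.2 q.1)
  have hG : StronglyMeasurable G :=
    (L.continuous.comp_stronglyMeasurable (hjm.comp_measurable
      ((measurable_fst.comp measurable_snd).prodMk measurable_fst))).mul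
    (L'.continuous.comp_stronglyMeasurable (hjm.comp_measurable
      ((measurable_snd.comp measurable_snd).prodMk measurable_fst)))
  have hGint : Integrable G (P.prod (μ.prod μ)) := by
    refine (integrable_prod_iff' hG.aestronglyMeasurable).2 ⟨ae_of_all _ fun z =>
      integrable_clm_comp_mul_clm_comp L L' (hv z.1).aestronglyMeasurable
        (hv z.2).aestronglyMeasurable (hnorm z.1) (hnorm z.2), ?_⟩
    refine Integrable.of_bound
      ((hG.norm.comp_measurable measurable_swap).integral_prod_right' (ν := P)).aestronglyMeasurable
      (‖L‖ * ‖L'‖ * (1 * 1) * P.real univ) (ae_of_all _ fun z => ?_)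
    refine norm_integral_le_of_norm_le_const ?_
    filter_upwards [hnorm z.1, hnorm z.2] with ω h₁ h₂
    rw [norm_norm]
    exact norm_clm_apply_mul_clm_apply_le L L' h₁ h₂
  calc ∫ ω, (∫ s in 0..T, L (v s ω)) * (∫ s in 0..T, L' (v s ω)) ∂P
      = ∫ ω, ∫ z, G (ω, z) ∂(μ.prod μ) ∂P := by
        simp only [intervalIntegral.integral_of_le hT, G]
        exact integral_congr_ae (ae_of_all _ fun ω => (integral_prod_mul _ _).symm)
    _ = ∫ z, ∫ ω, G (ω, z) ∂P ∂(μ.prod μ) := integral_integral_swap hGint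
    _ = ∫ s in Ioc 0 T, ∫ u in Ioc 0 T, ∫ ω, L (v s ω) * L' (v u ω) ∂P :=
        integral_prod _ hGint.integral_prod_right

variable [MeasurableSpace H]

def IsStationaryProcess (P : Measure Ω) (v : ℝ → Ω → H) : Prop :=
  ∀ (s : ℝ) (n : ℕ) (ts : Fin n → ℝ),
    Measure.map (fun ω i => v (ts i + s) ω) P = Measure.map (fun ω i => v (ts i) ω) P

variable [BorelSpace H]

theorem IsStationaryProcess.integral_clm_comp_mul_clm_comp_add (hstat : IsStationaryProcess P v)
    (hv : ∀ t, StronglyMeasurable (v t)) (L L' : H →L[ℝ] ℝ) (a b s : ℝ) :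
    ∫ ω, L (v (a + s) ω) * L' (v (b + s) ω) ∂P = ∫ ω, L (v a ω) * L' (v b ω) ∂P := by
  have hg : Measurable fun x : Fin 2 → H => L (x 0) * L' (x 1) :=
    (L.measurable.comp (measurable_pi_apply 0)).mul (L'.measurable.comp (measurable_pi_apply 1))
  have hpair : ∀ ts : Fin 2 → ℝ, Measurable fun ω i => v (ts i) ω := fun ts =>
    measurable_pi_lambda _ fun i => (hv (ts i)).measurable
  have := congrArg (fun μ => ∫ x, L (x 0) * L' (x 1) ∂μ) (hstat s 2 ![a, b])
  rwa [integral_map (hpair _).aemeasurable hg.aestronglyMeasurable,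
    integral_map (hpair _).aemeasurable hg.aestronglyMeasurable] at this

theorem IsStationaryProcess.integral_clm_comp_mul_clm_comp (hstat : IsStationaryProcess P v)
    (hv : ∀ t, StronglyMeasurable (v t)) (L L' : H →L[ℝ] ℝ) (a b : ℝ) :
    ∫ ω, L (v a ω) * L' (v b ω) ∂P = crossCorrelation P v L L' (b - a) := by
  simpa [crossCorrelation] using hstat.integral_clm_comp_mul_clm_comp_add hv L L' 0 (b - a) a

theorem IsStationaryProcess.crossCorrelation_neg (hstat : IsStationaryProcess P v)
    (hv : ∀ t, StronglyMeasurable (v t)) (L L' : H →L[ℝ] ℝ) (t : ℝ) :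
    crossCorrelation P v L L' (-t) = crossCorrelation P v L' L t := by
  have hshift := hstat.integral_clm_comp_mul_clm_comp_add hv L L' t 0 (-t)
  rw [add_neg_cancel, zero_add] at hshift
  rw [crossCorrelation, crossCorrelation, hshift]
  exact integral_congr_ae (ae_of_all _ fun ω => mul_comm _ _)

theorem IsStationaryProcess.abs_crossCorrelation_le [CompleteSpace H] [IsProbabilityMeasure P]
    (hstat : IsStationaryProcess P v) (hv : ∀ t, StronglyMeasurable (v t))
    (hnorm : ∀ t, ∀ᵐ ω ∂P, ‖v t ω‖ ≤ 1)
    {m : MeasurableSpace Ω} (hm : m ≤ mΩ) (hv₀ : StronglyMeasurable[m] (v 0)) {C τ : ℝ}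
    (hdecay : ∀ t, 0 ≤ t → ∀ᵐ ω ∂P, ‖P[v t | m] ω‖ ≤ C * Real.exp (-t / τ))
    (L L' : H →L[ℝ] ℝ) (t : ℝ) :
    |crossCorrelation P v L L' t| ≤ ‖L‖ * ‖L'‖ * (C * Real.exp (-|t| / τ)) := by
  rcases le_total 0 t with ht | ht
  · rw [abs_of_nonneg ht]
    exact abs_crossCorrelation_le_of_nonneg hv hnorm hm hv₀ hdecay L L' ht
  · calc |crossCorrelation P v L L' t| = |crossCorrelation P v L' L (-t)| := by
          rw [hstat.crossCorrelation_neg hv L' L t]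
      _ ≤ ‖L'‖ * ‖L‖ * (C * Real.exp (-(-t) / τ)) :=
          abs_crossCorrelation_le_of_nonneg hv hnorm hm hv₀ hdecay L' L (neg_nonneg.2 ht)
      _ = ‖L‖ * ‖L'‖ * (C * Real.exp (-|t| / τ)) := by rw [abs_of_nonpos ht, mul_comm ‖L'‖]

theorem IsStationaryProcess.integrable_crossCorrelation [CompleteSpace H] [IsProbabilityMeasure P]
    (hstat : IsStationaryProcess P v)
    (hjm : StronglyMeasurable (Function.uncurry v)) (hnorm : ∀ t, ∀ᵐ ω ∂P, ‖v t ω‖ ≤ 1)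
    {m : MeasurableSpace Ω} (hm : m ≤ mΩ) (hv₀ : StronglyMeasurable[m] (v 0)) {C τ : ℝ}
    (hτ : 0 < τ) (hdecay : ∀ t, 0 ≤ t → ∀ᵐ ω ∂P, ‖P[v t | m] ω‖ ≤ C * Real.exp (-t / τ))
    (L L' : H →L[ℝ] ℝ) : Integrable (crossCorrelation P v L L') := by
  have hv : ∀ t, StronglyMeasurable[mΩ] (v t) := fun t =>
    hjm.comp_measurable measurable_prodMk_left
  refine ((integrable_exp_neg_abs_div hτ).const_mul (‖L‖ * ‖L'‖ * C)).mono'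
    (stronglyMeasurable_crossCorrelation hjm L L').aestronglyMeasurable (ae_of_all _ fun t => ?_)
  rw [Real.norm_eq_abs, mul_assoc]
  exact hstat.abs_crossCorrelation_le hv hnorm hm hv₀ hdecay L L' t

end Correlation

theorem stmt10_general
    {H : Type*} [NormedAddCommGroup H] [InnerProductSpace ℝ H] [CompleteSpace H]
    [MeasurableSpace H] [BorelSpace H]
    {Ω : Type*} {mΩ : MeasurableSpace Ω} (P : Measure Ω) [IsProbabilityMeasure P]
    (C τ : ℝ) (hτ : 0 < τ)
    (F : ℝ → MeasurableSpace Ω) (v : ℝ → Ω → H)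
    (hFle : ∀ t : ℝ, F t ≤ mΩ)
    (hjm : StronglyMeasurable (Function.uncurry v))
    (hnorm : ∀ t : ℝ, ∀ᵐ ω ∂P, ‖v t ω‖ = 1)
    (hadapt : ∀ t : ℝ, StronglyMeasurable[F t] (v t))
    (hstat : ∀ (s : ℝ) (n : ℕ) (ts : Fin n → ℝ),
      Measure.map (fun ω i => v (ts i + s) ω) P
        = Measure.map (fun ω i => v (ts i) ω) P)
    (hdecay : ∀ s t : ℝ, s ≤ t →
      ∀ᵐ ω ∂P, ‖(P[v t | F s]) ω‖ ≤ C * Real.exp (-(t - s) / τ))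
    (ℓ ℓ' : H →L[ℝ] ℝ) :
    IntegrableOn (fun t : ℝ => ∫ ω, ℓ (v 0 ω) * ℓ' (v t ω) ∂P) (Set.Ici (0:ℝ)) ∧
    Tendsto (fun T : ℝ => T⁻¹ *
        ∫ ω, (∫ s in (0:ℝ)..T, ℓ (v s ω)) * (∫ s in (0:ℝ)..T, ℓ' (v s ω)) ∂P) atTop
      (nhds (∫ t in Set.Ioi (0:ℝ),
        (∫ ω, (ℓ (v 0 ω) * ℓ' (v t ω) + ℓ' (v 0 ω) * ℓ (v t ω)) ∂P))) := by
  have hstat : IsStationaryProcess P v := hstat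
  have hv : ∀ t, StronglyMeasurable (v t) := fun t => hjm.comp_measurable measurable_prodMk_left
  have hle : ∀ t, ∀ᵐ ω ∂P, ‖v t ω‖ ≤ 1 := fun t => (hnorm t).mono fun _ h => h.le
  have hdecay₀ : ∀ t, 0 ≤ t → ∀ᵐ ω ∂P, ‖P[v t | F 0] ω‖ ≤ C * Real.exp (-t / τ) :=
    fun t ht => by simpa using hdecay 0 t ht
  have hk : ∀ L L' : H →L[ℝ] ℝ, Integrable (crossCorrelation P v L L') :=
    hstat.integrable_crossCorrelation hjm hle (hFle 0) (hadapt 0) hτ hdecay₀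
  refine ⟨(hk ℓ ℓ').integrableOn, ?_⟩
  have hlimit : ∫ t in Ioi 0, ∫ ω, (ℓ (v 0 ω) * ℓ' (v t ω) + ℓ' (v 0 ω) * ℓ (v t ω)) ∂P
      = ∫ t, crossCorrelation P v ℓ ℓ' t := by
    rw [← integral_Ioi_add_comp_neg (hk ℓ ℓ')]
    refine setIntegral_congr_fun measurableSet_Ioi fun t _ => ?_
    rw [integral_add (integrable_clm_comp_mul_clm_comp ℓ ℓ' (hv 0).aestronglyMeasurable
        (hv t).aestronglyMeasurable (hle 0) (hle t)) (integrable_clm_comp_mul_clm_comp ℓ' ℓ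
        (hv 0).aestronglyMeasurable (hv t).aestronglyMeasurable (hle 0) (hle t)),
      hstat.crossCorrelation_neg hv]
    rfl
  rw [hlimit]
  refine (tendsto_inv_smul_integral_Ioc_integral_Ioc_comp_sub (hk ℓ ℓ')).congr' ?_
  filter_upwards [eventually_ge_atTop 0] with T hT
  simp only [integral_intervalIntegral_mul_intervalIntegral hjm hle ℓ ℓ' hT, smul_eq_mul,
    hstat.integral_clm_comp_mul_clm_comp hv]

/-- **The limiting covariance (Propositions 2.5 and Theorem 2.10).** With `v` as in
hypotheses (i)–(iv) and `ℓ, ℓ'` continuous linear functionals on `H`, the function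
`t ↦ E[ℓ(v_0)ℓ'(v_t)]` is absolutely integrable on `[0, ∞)`, and
`(1/T)·E[(∫_0^T ℓ(v_s) ds)(∫_0^T ℓ'(v_s) ds)] → ∫_0^∞ E[ℓ(v_0)ℓ'(v_t) + ℓ'(v_0)ℓ(v_t)] dt`
as `T → ∞`. -/
theorem stmt10
    {H : Type*} [NormedAddCommGroup H] [InnerProductSpace ℝ H] [CompleteSpace H]
    [SecondCountableTopology H] [MeasurableSpace H] [BorelSpace H]
    {Ω : Type*} {mΩ : MeasurableSpace Ω} (P : Measure Ω) [IsProbabilityMeasure P]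
    (C τ : ℝ) (hC : 0 ≤ C) (hτ : 0 < τ)
    (F : ℝ → MeasurableSpace Ω) (v : ℝ → Ω → H)
    (hFmono : Monotone F) (hFle : ∀ t : ℝ, F t ≤ mΩ)
    (hjm : StronglyMeasurable (Function.uncurry v))
    (hnorm : ∀ t : ℝ, ∀ᵐ ω ∂P, ‖v t ω‖ = 1)
    (hadapt : ∀ t : ℝ, StronglyMeasurable[F t] (v t))
    (hstat : ∀ (s : ℝ) (n : ℕ) (ts : Fin n → ℝ),
      Measure.map (fun ω i => v (ts i + s) ω) P
        = Measure.map (fun ω i => v (ts i) ω) P)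
    (hdecay : ∀ s t : ℝ, s ≤ t →
      ∀ᵐ ω ∂P, ‖(P[v t | F s]) ω‖ ≤ C * Real.exp (-(t - s) / τ))
    (ℓ ℓ' : H →L[ℝ] ℝ) :
    IntegrableOn (fun t : ℝ => ∫ ω, ℓ (v 0 ω) * ℓ' (v t ω) ∂P) (Set.Ici (0:ℝ)) ∧
    Tendsto (fun T : ℝ => T⁻¹ *
        ∫ ω, (∫ s in (0:ℝ)..T, ℓ (v s ω)) * (∫ s in (0:ℝ)..T, ℓ' (v s ω)) ∂P) atTop
      (nhds (∫ t in Set.Ioi (0:ℝ),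
        (∫ ω, (ℓ (v 0 ω) * ℓ' (v t ω) + ℓ' (v 0 ω) * ℓ (v t ω)) ∂P))) :=
  stmt10_general P C τ hτ F v hFle hjm hnorm hadapt hstat hdecay ℓ ℓ'
end

section
/- Let E be a real Banach space, H a real Hilbert space, and A ⊆ E an open set. Let F : E × H → H be a map which is infinitely Fréchet differentiable (C^∞) on A × H and such that for every a ∈ A the map w ↦ F(a, w) is linear. Then: (1) for every a ∈ A the map F(a, ·) is a bounded linear operator on H, so the curried map Cur F : A → L(H), a ↦ F(a, ·), is well defined; (2) Cur F is C^∞ from A into the Banach space L(H) of bounded linear operators on H equipped with the operator norm; (3) its differential is the curryfication of the partial differential of F in its first argument: for a ∈ A and b ∈ E, d(Cur F)(a)(b) is the bounded operator w ↦ (∂_a F)(a, w)(b). -/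
/-!
Linearity of `F (a, ·)` forces it to agree with its derivative at `0`, so the curried map is
`a ↦ ∂₂F (a, 0) = dF (a, 0) ∘ inr`, which is smooth because `dF` is. Its differential is then
obtained by differentiating `a ↦ Cur F a w = F (a, w)` for each fixed `w`.
-/

open Filter Topology ContinuousLinearMap

section

variable {𝕜 : Type*} [NontriviallyNormedField 𝕜]
  {E : Type*} [NormedAddCommGroup E] [NormedSpace 𝕜 E]
  {G : Type*} [NormedAddCommGroup G] [NormedSpace 𝕜 G]
  {H : Type*} [NormedAddCommGroup H] [NormedSpace 𝕜 H]

theorem IsLinearMap.eq_of_hasFDerivAt_zero {f : G → H} (hf : IsLinearMap 𝕜 f) {L : G →L[𝕜] H}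
    (hL : HasFDerivAt f L 0) : f = L := by
  -- differentiability at `0` makes the linear map continuous
  let g : G →L[𝕜] H := ⟨hf.mk' f, continuous_of_continuousAt_zero (hf.mk' f) hL.continuousAt⟩
  exact congrArg DFunLike.coe (g.hasFDerivAt.unique hL)

theorem IsLinearMap.fderiv_comp_inr_apply {F : E × G → H} {a : E}
    (hlin : IsLinearMap 𝕜 fun w => F (a, w)) (hF : DifferentiableAt 𝕜 F (a, 0)) (w : G) :
    (fderiv 𝕜 F (a, 0)).comp (inr 𝕜 E G) w = F (a, w) := by
  have hpartial : HasFDerivAt (fun w => F (a, w)) ((fderiv 𝕜 F (a, 0)).comp (inr 𝕜 E G)) 0 :=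
    hF.hasFDerivAt.comp 0 (hasFDerivAt_prodMk_right a 0)
  exact (congrFun (hlin.eq_of_hasFDerivAt_zero hpartial) w).symm

theorem fderiv_apply_eq_fderiv_comp_inl {Φ : E → G →L[𝕜] H} {F : E × G → H} {a : E} {w : G}
    (hΦ : DifferentiableAt 𝕜 Φ a) (hF : DifferentiableAt 𝕜 F (a, w))
    (hΦF : ∀ᶠ a' in 𝓝 a, Φ a' w = F (a', w)) (b : E) :
    fderiv 𝕜 Φ a b w = fderiv 𝕜 F (a, w) (b, 0) := by
  have hΦw : HasFDerivAt (fun a' => Φ a' w) ((apply 𝕜 H w).comp (fderiv 𝕜 Φ a)) a :=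
    (apply 𝕜 H w).hasFDerivAt.comp a hΦ.hasFDerivAt
  have hFw : HasFDerivAt (fun a' => F (a', w)) ((fderiv 𝕜 F (a, w)).comp (inl 𝕜 E G)) a :=
    hF.hasFDerivAt.comp a (hasFDerivAt_prodMk_left a w)
  simpa using congrArg (· b) (hΦw.unique (hFw.congr_of_eventuallyEq hΦF))

end

theorem stmt13_general
    {E : Type*} [NormedAddCommGroup E] [NormedSpace ℝ E]
    {H : Type*} [NormedAddCommGroup H] [InnerProductSpace ℝ H]
    (A : Set E) (hA : IsOpen A) (F : E × H → H)
    (hF : ContDiffOn ℝ (⊤ : ℕ∞) F (A ×ˢ (Set.univ : Set H)))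
    (hlin : ∀ a ∈ A, IsLinearMap ℝ (fun w : H => F (a, w))) :
    ∃ Φ : E → (H →L[ℝ] H),
      (∀ a ∈ A, ∀ w : H, Φ a w = F (a, w)) ∧
      ContDiffOn ℝ (⊤ : ℕ∞) Φ A ∧
      ∀ a ∈ A, ∀ b : E, ∀ w : H,
        (fderiv ℝ Φ a b) w = fderiv ℝ F (a, w) (b, 0) := by
  have hs : IsOpen (A ×ˢ (Set.univ : Set H)) := hA.prod isOpen_univ
  have hdiff : ∀ a ∈ A, ∀ w : H, DifferentiableAt ℝ F (a, w) := fun a ha w =>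
    hF.differentiableOn (by simp) |>.differentiableAt (hs.mem_nhds ⟨ha, trivial⟩)
  set Φ : E → H →L[ℝ] H := fun a => (fderiv ℝ F (a, 0)).comp (inr ℝ E H)
  have hΦF : ∀ a ∈ A, ∀ w : H, Φ a w = F (a, w) := fun a ha =>
    (hlin a ha).fderiv_comp_inr_apply (hdiff a ha 0)
  have hΦ : ContDiffOn ℝ (⊤ : ℕ∞) Φ A :=
    ((hF.fderiv_of_isOpen hs le_rfl).comp (contDiff_id.prodMk contDiff_const).contDiffOn
      fun a ha => ⟨ha, trivial⟩).clm_comp contDiffOn_const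
  refine ⟨Φ, hΦF, hΦ, fun a ha b w => ?_⟩
  exact fderiv_apply_eq_fderiv_comp_inl
    (hΦ.differentiableOn (by simp) |>.differentiableAt (hA.mem_nhds ha)) (hdiff a ha w)
    (eventually_of_mem (hA.mem_nhds ha) fun a' ha' => hΦF a' ha' w) b

/-- **Currying lemma (Appendix A).** Let `E` be a real Banach space, `H` a real
Hilbert space, `A ⊆ E` open, and `F : E × H → H` a `C^∞` map on `A × H` such that
`F(a, ·)` is linear for each `a ∈ A`. Then each `F(a, ·)` is a bounded operator,
the curried map `Cur F : A → L(H)` is well defined and `C^∞` into the space of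
bounded operators with the operator norm, and its differential is the curryfication
of the partial differential of `F` in its first argument:
`d(Cur F)(a)(b)(w) = (∂ₐF)(a, w)(b) = dF(a,w)(b, 0)`. -/
theorem stmt13
    {E : Type*} [NormedAddCommGroup E] [NormedSpace ℝ E] [CompleteSpace E]
    {H : Type*} [NormedAddCommGroup H] [InnerProductSpace ℝ H] [CompleteSpace H]
    (A : Set E) (hA : IsOpen A) (F : E × H → H)
    (hF : ContDiffOn ℝ (⊤ : ℕ∞) F (A ×ˢ (Set.univ : Set H)))
    (hlin : ∀ a ∈ A, IsLinearMap ℝ (fun w : H => F (a, w))) :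
    ∃ Φ : E → (H →L[ℝ] H),
      (∀ a ∈ A, ∀ w : H, Φ a w = F (a, w)) ∧
      ContDiffOn ℝ (⊤ : ℕ∞) Φ A ∧
      ∀ a ∈ A, ∀ b : E, ∀ w : H,
        (fderiv ℝ Φ a b) w = fderiv ℝ F (a, w) (b, 0) :=
  stmt13_general A hA F hF hlin
end
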